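/- arXiv:2507.08856 — 2 statements merged into one kernel-verified Lean document; each statement's English description precedes it below -/
import Mathlib

section
/- Let A be a unital *-subalgebra of L(H), H finite-dimensional, and {P_i} a maximal family of nonzero pairwise orthogonal self-adjoint projectors in A summing to the identity. Define i ∼ j iff P_i A P_j ≠ 0. Then ∼ is an equivalence relation on the index set. -/
/-!
Reflexivity and symmetry are immediate. For transitivity, suppose `X = P i M P j` and
`Y = P j N P k` are nonzero but `X Y = 0`. Then `T = X⋆ X` is a nonzero self-adjoint element
of the corner `P j A P j` with `T Y = 0`. The range projection `R` of `T` is a polynomial in `T`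
without constant term, so `R ∈ A` and `R ≤ P j`. Below `P j`, the algebra generated by the `P i`
contains only multiples of `P j`; hence unless `R = P j`, splitting `P j` into `R` and `P j - R`
gives a family generating a strictly larger algebra. Maximality forces `R = P j`, and then
`Y = P j Y = R Y = 0`.
-/

open scoped BigOperators

/-- A family of nonzero, self-adjoint, pairwise orthogonal projectors in `A`. -/
def IsOrthProjFamily {E : Type*} [NormedAddCommGroup E] [InnerProductSpace ℂ E]
    [FiniteDimensional ℂ E] (A : StarSubalgebra ℂ (E →ₗ[ℂ] E))
    {p : ℕ} (P : Fin p → (E →ₗ[ℂ] E)) : Prop :=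
  (∀ i, P i ∈ A) ∧ (∀ i, P i ≠ 0) ∧ (∀ i, star (P i) = P i) ∧
    (∀ i j, P i * P j = if i = j then P i else 0)

/-- Maximality: no such family spans a strictly larger subalgebra. -/
def IsMaximalOrthProjFamily {E : Type*} [NormedAddCommGroup E] [InnerProductSpace ℂ E]
    [FiniteDimensional ℂ E] (A : StarSubalgebra ℂ (E →ₗ[ℂ] E))
    {p : ℕ} (P : Fin p → (E →ₗ[ℂ] E)) : Prop :=
  IsOrthProjFamily A P ∧
    ∀ (m : ℕ) (Q : Fin m → (E →ₗ[ℂ] E)), IsOrthProjFamily A Q →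
      ¬ Algebra.adjoin ℂ (Set.range P) < Algebra.adjoin ℂ (Set.range Q)

open Polynomial

theorem Polynomial.star_aeval {R B : Type*} [CommSemiring R] [StarRing R] [Semiring B]
    [StarRing B] [Algebra R B] [StarModule R B] (a : B) (q : R[X]) :
    star (aeval a q) = aeval (star a) (q.map (starRingEnd R)) := by
  induction q using Polynomial.induction_on' with
  | add p q hp hq => simp only [map_add, star_add, hp, hq, Polynomial.map_add]
  | monomial n c =>
    rw [aeval_monomial, map_monomial, aeval_monomial, star_mul, star_pow, ← algebraMap_star_comm,
      Algebra.commutes, starRingEnd_apply]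

section SpectralProjection

variable {𝕜 E : Type*} [RCLike 𝕜] [NormedAddCommGroup E] [InnerProductSpace 𝕜 E]
  [FiniteDimensional 𝕜 E]

theorem LinearMap.star_mul_self_eq_zero_iff {X : E →ₗ[𝕜] E} : star X * X = 0 ↔ X = 0 := by
  rw [← ker_eq_top, ← ker_eq_top, star_eq_adjoint, Module.End.mul_eq_comp,
    ker_adjoint_comp_self]

theorem LinearMap.IsSymmetric.aeval_eq_aeval_of_forall_hasEigenvalue {T : E →ₗ[𝕜] E}
    (hT : T.IsSymmetric) {p q : 𝕜[X]}
    (h : ∀ μ, Module.End.HasEigenvalue T μ → p.eval μ = q.eval μ) :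
    aeval T p = aeval T q := by
  ext v
  have hv : v ∈ ⨆ μ, Module.End.eigenspace T μ := by
    rw [Submodule.orthogonal_eq_bot_iff.mp hT.orthogonalComplement_iSup_eigenspaces_eq_bot]
    exact Submodule.mem_top
  induction hv using Submodule.iSup_induction' with
  | mem μ x hx =>
    obtain rfl | hx0 := eq_or_ne x 0
    · simp
    have hμ := Module.End.hasEigenvalue_of_hasEigenvector ⟨hx, hx0⟩
    rw [Module.End.mem_eigenspace_iff] at hx
    rw [Module.End.aeval_apply_of_mem_apply_eq_smul hx,
      Module.End.aeval_apply_of_mem_apply_eq_smul hx, h μ hμ]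
  | zero => simp
  | add x y _ _ hx hy => simp [hx, hy]

theorem LinearMap.exists_isStarProjection_mul_aeval {T : E →ₗ[𝕜] E} (hT : IsSelfAdjoint T) :
    ∃ r : 𝕜[X], IsStarProjection (T * aeval T r) ∧ T * (T * aeval T r) = T := by
  have hsymm := (T.isSymmetric_iff_isSelfAdjoint).mpr hT
  set q : 𝕜[X] :=
    1 - ∏ ν ∈ (Module.End.finite_hasEigenvalue T).toFinset.erase 0, (1 - C ν⁻¹ * X)
  have hq : ∀ μ, Module.End.HasEigenvalue T μ → q.eval μ = if μ = 0 then 0 else 1 := by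
    intro μ hμ
    split_ifs with h0
    · simp [q, h0, eval_prod]
    · rw [eval_sub, eval_one, eval_prod, sub_eq_self]
      exact Finset.prod_eq_zero (i := μ) (by simpa [h0] using hμ) (by simp [h0])
  obtain ⟨r, hr⟩ : X ∣ q := X_dvd_iff.mpr (by simp [q, coeff_zero_eq_eval_zero, eval_prod])
  have hqT : aeval T q = T * aeval T r := by rw [hr, map_mul, aeval_X]
  refine ⟨r, ⟨?_, ?_⟩, ?_⟩ <;> rw [← hqT]
  · rw [IsIdempotentElem, ← map_mul]
    refine hsymm.aeval_eq_aeval_of_forall_hasEigenvalue fun μ hμ => ?_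
    rw [eval_mul, hq μ hμ]
    split_ifs <;> simp
  · rw [IsSelfAdjoint, star_aeval, hT.star_eq]
    refine hsymm.aeval_eq_aeval_of_forall_hasEigenvalue fun μ hμ => ?_
    conv_lhs => rw [← hsymm.conj_eigenvalue_eq_self hμ]
    rw [eval_map_apply, hq μ hμ]
    split_ifs <;> simp
  · calc T * aeval T q = aeval T (X * q) := by rw [map_mul, aeval_X]
      _ = aeval T X := hsymm.aeval_eq_aeval_of_forall_hasEigenvalue fun μ hμ => by
        rw [eval_mul, hq μ hμ]
        split_ifs <;> simp [*]
      _ = T := aeval_X T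

end SpectralProjection

def splitAt {ι B : Type*} [Ring B] [DecidableEq ι] (e : ι → B) (j : ι) (r : B) : Option ι → B :=
  fun o => o.elim (e j - r) (Function.update e j r)

namespace OrthogonalIdempotents

variable {K B ι : Type*} {e : ι → B}

theorem exists_mul_eq_smul_of_mem_adjoin [CommSemiring K] [Semiring B] [Algebra K B] (he : OrthogonalIdempotents e) (j : ι) {x : B}
    (hx : x ∈ Algebra.adjoin K (Set.range e)) : ∃ c : K, e j * x = c • e j := by
  classical
  induction hx using Algebra.adjoin_induction with
  | mem x hx =>
    obtain ⟨i, rfl⟩ := hx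
    rw [he.mul_eq]
    split_ifs with h
    · exact ⟨1, by rw [one_smul, h]⟩
    · exact ⟨0, by rw [zero_smul]⟩
  | algebraMap c => exact ⟨c, by rw [← Algebra.commutes, Algebra.smul_def]⟩
  | add x y _ _ hx hy =>
    obtain ⟨a, ha⟩ := hx
    obtain ⟨b, hb⟩ := hy
    exact ⟨a + b, by rw [mul_add, ha, hb, add_smul]⟩
  | mul x y _ _ hx hy =>
    obtain ⟨a, ha⟩ := hx
    obtain ⟨b, hb⟩ := hy
    exact ⟨a * b, by rw [← mul_assoc, ha, smul_mul_assoc, hb, smul_smul]⟩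

variable [Field K] [Ring B] [Algebra K B]

theorem eq_zero_or_eq_of_mem_adjoin (he : OrthogonalIdempotents e) {j : ι} {x : B}
    (hx : x ∈ Algebra.adjoin K (Set.range e)) (hidem : IsIdempotentElem x) (hjx : e j * x = x) :
    x = 0 ∨ x = e j := by
  obtain ⟨c, hc⟩ := he.exists_mul_eq_smul_of_mem_adjoin j hx
  rw [hjx] at hc
  subst hc
  obtain hj | hj := eq_or_ne (e j) 0
  · simp [hj]
  have hc : IsIdempotentElem c := smul_left_injective K hj <| by
    simpa only [IsIdempotentElem, smul_mul_smul_comm, (he.idem j).eq] using hidem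
  obtain rfl | rfl := IsIdempotentElem.iff_eq_zero_or_one.mp hc <;> simp

variable [DecidableEq ι] {j : ι} {r : B}

theorem adjoin_range_lt_adjoin_range_splitAt (he : OrthogonalIdempotents e)
    (hr : IsIdempotentElem r) (hjr : e j * r = r) (hr0 : r ≠ 0) (hrj : r ≠ e j) :
    Algebra.adjoin K (Set.range e) < Algebra.adjoin K (Set.range (splitAt e j r)) := by
  set f := splitAt e j r
  have hf : ∀ o, f o ∈ Algebra.adjoin K (Set.range f) := fun o => Algebra.subset_adjoin ⟨o, rfl⟩
  have hr_mem : r ∈ Algebra.adjoin K (Set.range f) := by simpa [f, splitAt] using hf (some j)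
  refine lt_of_le_of_ne (Algebra.adjoin_le ?_) fun h => ?_
  · rintro _ ⟨i, rfl⟩
    obtain rfl | hi := eq_or_ne i j
    · simpa [f, splitAt] using add_mem hr_mem (hf none)
    · simpa [f, splitAt, hi] using hf (some i)
  · rw [← h] at hr_mem
    exact (he.eq_zero_or_eq_of_mem_adjoin hr_mem hr hjr).elim hr0 hrj

theorem splitAt (he : OrthogonalIdempotents e) (hr : IsIdempotentElem r)
    (hjr : e j * r = r) (hrj : r * e j = r) :
    OrthogonalIdempotents (splitAt e j r) := by
  have hri : ∀ i ≠ j, r * e i = 0 := fun i hi => by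
    rw [← hrj, mul_assoc, he.ortho hi.symm, mul_zero]
  have hir : ∀ i ≠ j, e i * r = 0 := fun i hi => by
    rw [← hjr, ← mul_assoc, he.ortho hi, zero_mul]
  rw [iff_mul_eq]
  rintro (_ | a) (_ | b) <;>
    simp only [_root_.splitAt, Option.elim_none, Option.elim_some, Function.update_apply,
      reduceCtorEq, if_false, Option.some.injEq, if_true]
  · simp [mul_sub, sub_mul, hjr, hrj, (he.idem j).eq, hr.eq]
  · split_ifs with h
    · subst h
      simp [sub_mul, hjr, hr.eq]
    · simp [sub_mul, he.ortho (Ne.symm h), hri b h]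
  · split_ifs with h
    · subst h
      simp [mul_sub, hrj, hr.eq]
    · simp [mul_sub, he.ortho h, hir a h]
  · split_ifs <;> subst_vars <;> simp_all [he.mul_eq, hr.eq]

end OrthogonalIdempotents

section MaximalFamily

variable {E : Type*} [NormedAddCommGroup E] [InnerProductSpace ℂ E] [FiniteDimensional ℂ E]
  {A : StarSubalgebra ℂ (E →ₗ[ℂ] E)} {p : ℕ} {P : Fin p → (E →ₗ[ℂ] E)}

theorem isOrthProjFamily_iff {m : ℕ} {Q : Fin m → (E →ₗ[ℂ] E)} :
    IsOrthProjFamily A Q ↔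
      (∀ i, Q i ∈ A ∧ Q i ≠ 0 ∧ IsSelfAdjoint (Q i)) ∧ OrthogonalIdempotents Q := by
  simp only [IsOrthProjFamily, OrthogonalIdempotents.iff_mul_eq, forall_and, IsSelfAdjoint,
    and_assoc]

theorem IsMaximalOrthProjFamily.eq_zero_or_eq_of_isStarProjection
    (hP : IsMaximalOrthProjFamily A P) {j : Fin p} {R : E →ₗ[ℂ] E} (hRA : R ∈ A)
    (hR : IsStarProjection R) (hjR : P j * R = R) : R = 0 ∨ R = P j := by
  obtain ⟨hPfam, hmax⟩ := hP
  obtain ⟨hPi, he⟩ := isOrthProjFamily_iff.mp hPfam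
  have hRj : R * P j = R := by
    simpa [hR.isSelfAdjoint.star_eq, (hPi j).2.2.star_eq] using congr(star $hjR)
  by_contra! hR_ne
  refine hmax (p + 1) (splitAt P j R ∘ finSuccEquiv p) (isOrthProjFamily_iff.mpr ⟨?_, ?_⟩) ?_
  · have hsplit : ∀ o, splitAt P j R o ∈ A ∧ splitAt P j R o ≠ 0 ∧
        IsSelfAdjoint (splitAt P j R o) := by
      refine Option.forall.mpr ⟨⟨sub_mem (hPi j).1 hRA, sub_ne_zero.mpr hR_ne.2.symm,
        (hPi j).2.2.sub hR.isSelfAdjoint⟩, ?_⟩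
      exact (Function.forall_update_iff P (p := fun _ y => y ∈ A ∧ y ≠ 0 ∧ IsSelfAdjoint y)).mpr
        ⟨⟨hRA, hR_ne.1, hR.isSelfAdjoint⟩, fun i _ => hPi i⟩
    exact fun i => hsplit _
  · exact (OrthogonalIdempotents.equiv _).mpr (he.splitAt hR.isIdempotentElem hjR hRj)
  · rw [EquivLike.range_comp]
    exact he.adjoin_range_lt_adjoin_range_splitAt hR.isIdempotentElem hjR hR_ne.1 hR_ne.2

theorem IsMaximalOrthProjFamily.mul_eq_zero_of_mul_eq_zero (hP : IsMaximalOrthProjFamily A P)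
    {j : Fin p} {T Y : E →ₗ[ℂ] E} (hTA : T ∈ A) (hT : IsSelfAdjoint T) (hT0 : T ≠ 0)
    (hjT : P j * T = T) (hTY : T * Y = 0) : P j * Y = 0 := by
  obtain ⟨r, hR, hTR⟩ := T.exists_isStarProjection_mul_aeval hT
  have hrA : aeval T r ∈ A.toSubalgebra :=
    Algebra.adjoin_le (Set.singleton_subset_iff.mpr hTA) (aeval_mem_adjoin_singleton ℂ T)
  obtain h | h := hP.eq_zero_or_eq_of_isStarProjection (mul_mem hTA hrA) hR
    (by rw [← mul_assoc, hjT])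
  · exact absurd (by rw [← hTR, h, mul_zero]) hT0
  · rw [← h, ← hR.isSelfAdjoint.star_eq, star_mul, hT.star_eq, mul_assoc, hTY, mul_zero]

theorem IsMaximalOrthProjFamily.mul_ne_zero (hP : IsMaximalOrthProjFamily A P) {j : Fin p}
    {X Y : E →ₗ[ℂ] E} (hXA : X ∈ A) (hX : X ≠ 0) (hXj : X * P j = X) (hY : Y ≠ 0)
    (hjY : P j * Y = Y) : X * Y ≠ 0 := by
  intro hXY
  have hjX : P j * star X = star X := by
    simpa [hP.1.2.2.1 j] using congr(star $hXj)
  refine hY ?_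
  rw [← hjY]
  exact hP.mul_eq_zero_of_mul_eq_zero (mul_mem (star_mem hXA) hXA) (.star_mul_self X)
    (LinearMap.star_mul_self_eq_zero_iff.not.mpr hX) (by rw [← mul_assoc, hjX])
    (by rw [mul_assoc, hXY, mul_zero])

end MaximalFamily

theorem corner_relation_equivalence_general
    {E : Type*} [NormedAddCommGroup E] [InnerProductSpace ℂ E] [FiniteDimensional ℂ E]
    (A : StarSubalgebra ℂ (E →ₗ[ℂ] E)) {p : ℕ} (P : Fin p → (E →ₗ[ℂ] E))
    (hP : IsMaximalOrthProjFamily A P) :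
    Equivalence (fun i j : Fin p => ∃ M ∈ A, P i * M * P j ≠ 0) := by
  obtain ⟨hPA, hP0, hPsa, hPmul⟩ := hP.1
  have hidem : ∀ i, P i * P i = P i := fun i => by simpa using hPmul i i
  refine ⟨fun i => ⟨P i, hPA i, by simpa [hidem] using hP0 i⟩, ?_, ?_⟩
  · rintro i j ⟨M, hM, hMne⟩
    refine ⟨star M, star_mem hM, fun h => hMne ?_⟩
    simpa [star_mul, hPsa, mul_assoc] using congr(star $h)
  · rintro i j k ⟨M, hM, hX⟩ ⟨N, hN, hY⟩
    refine ⟨M * P j * N, mul_mem (mul_mem hM (hPA j)) hN, ?_⟩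
    have hXY := hP.mul_ne_zero (mul_mem (mul_mem (hPA i) hM) (hPA j)) hX
      (by rw [mul_assoc, hidem]) hY (by rw [← mul_assoc, ← mul_assoc, hidem])
    simpa only [mul_assoc, ← mul_assoc (P j) (P j), hidem] using hXY

theorem corner_relation_equivalence
    {E : Type*} [NormedAddCommGroup E] [InnerProductSpace ℂ E] [FiniteDimensional ℂ E]
    (A : StarSubalgebra ℂ (E →ₗ[ℂ] E)) {p : ℕ} (P : Fin p → (E →ₗ[ℂ] E))
    (hP : IsMaximalOrthProjFamily A P) (hsum : ∑ i, P i = 1) :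
    Equivalence (fun i j : Fin p => ∃ M ∈ A, P i * M * P j ≠ 0) :=
  corner_relation_equivalence_general A P hP
end

section
/- Let A be a unital *-subalgebra of L(H), {P_i} a maximal family of nonzero pairwise orthogonal self-adjoint projectors in A summing to 1, and suppose M ∈ P_i A P_j with M ≠ 0 for i ≠ j. Then P_i A P_j = ℂ·M, i.e., the off-diagonal corners are at most one-dimensional. -/
open scoped BigOperators

/-!
A self-adjoint element `S ≠ 0` of a diagonal corner `P j A P j` has a spectral projection for a
nonzero eigenvalue; being a polynomial in `S` it lies in `A`, and it sits below `P j`. Maximality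
forbids splitting `P j`, so that projection is `P j` itself and `S` is a multiple of `P j`; taking
real and imaginary parts, every diagonal corner is `ℂ P j`. For `M ≠ 0` in `P i A P j` and any `N`
in that corner, `M M† = λ P i` with `λ ≠ 0` and `M† N = μ P j`, hence `λ N = M M† N = μ M`.
-/

open Polynomial ComplexStarModule

section OrthogonalIdempotents

variable {K B ι : Type*} [DecidableEq ι]

theorem exists_smul_of_mem_adjoin_range [CommSemiring K] [Semiring B] [Algebra K B]
    {P : ι → B} (hP : ∀ i j, P i * P j = if i = j then P i else 0) (j : ι) {X : B}
    (hX : X ∈ Algebra.adjoin K (Set.range P)) :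
    ∃ c : K, P j * X = c • P j ∧ X * P j = c • P j := by
  induction hX using Algebra.adjoin_induction with
  | mem x hx =>
    obtain ⟨k, rfl⟩ := hx
    refine ⟨if j = k then 1 else 0, ?_, ?_⟩ <;> rw [hP] <;> split_ifs <;> simp_all
  | algebraMap r => exact ⟨r, by simp [Algebra.smul_def, Algebra.commutes]⟩
  | add x y _ _ hx hy =>
    obtain ⟨a, hxl, hxr⟩ := hx
    obtain ⟨b, hyl, hyr⟩ := hy
    exact ⟨a + b, by rw [mul_add, hxl, hyl, add_smul], by rw [add_mul, hxr, hyr, add_smul]⟩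
  | mul x y _ _ hx hy =>
    obtain ⟨a, hxl, hxr⟩ := hx
    obtain ⟨b, hyl, hyr⟩ := hy
    refine ⟨a * b, ?_, ?_⟩
    · rw [← mul_assoc, hxl, smul_mul_assoc, hyl, smul_smul]
    · rw [mul_assoc, hyr, mul_smul_comm, hxr, smul_smul, mul_comm]

theorem eq_zero_or_eq_of_mem_adjoin_range [Field K] [Ring B] [Algebra K B]
    [Module.IsTorsionFree K B] {P : ι → B} (hP : ∀ i j, P i * P j = if i = j then P i else 0)
    {j : ι} (hj : P j ≠ 0) {Q : B} (hQ : IsIdempotentElem Q) (hQj : P j * Q = Q)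
    (hQP : Q ∈ Algebra.adjoin K (Set.range P)) : Q = 0 ∨ Q = P j := by
  obtain ⟨c, hc, -⟩ := exists_smul_of_mem_adjoin_range hP j hQP
  rw [hQj] at hc
  have hjj : P j * P j = P j := by simpa using hP j j
  have hcc : IsIdempotentElem c := smul_left_injective K hj <|
    calc (c * c) • P j = (c • P j) * (c • P j) := by rw [smul_mul_smul_comm, hjj]
      _ = c • P j := by rw [← hc, hQ.eq]
  rcases IsIdempotentElem.iff_eq_zero_or_one.mp hcc with rfl | rfl
  · exact .inl (by rw [hc, zero_smul])
  · exact .inr (by rw [hc, one_smul])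

end OrthogonalIdempotents

theorem IsSelfAdjoint.aeval_of_forall_coeff {R B : Type*} [CommSemiring R] [StarRing R]
    [Semiring B] [StarRing B] [Algebra R B] [StarModule R B] {S : B} (hS : IsSelfAdjoint S) {q : R[X]}
    (hq : ∀ n, IsSelfAdjoint (q.coeff n)) : IsSelfAdjoint (aeval S q) := by
  rw [aeval_eq_sum_range]
  exact isSelfAdjoint_sum _ fun n _ => (hq n).smul (hS.pow n)

theorem LinearMap.eq_zero_of_mul_star_self_eq_zero {𝕜 E : Type*} [RCLike 𝕜]
    [NormedAddCommGroup E] [InnerProductSpace 𝕜 E] [FiniteDimensional 𝕜 E] {M : E →ₗ[𝕜] E}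
    (h : M * star M = 0) : M = 0 := by
  have hker := LinearMap.ker_self_comp_adjoint M
  rw [← Module.End.mul_eq_comp, ← LinearMap.star_eq_adjoint, h, LinearMap.ker_zero, eq_comm,
    LinearMap.ker_eq_top] at hker
  simpa using congrArg star hker

section Spectral

variable {E : Type*} [NormedAddCommGroup E] [InnerProductSpace ℂ E] [FiniteDimensional ℂ E]

/-- `Q` is the spectral projection of `S` for a nonzero eigenvalue `t`. -/
theorem IsSelfAdjoint.exists_isStarProjection_dvd {S : E →ₗ[ℂ] E} (hS : IsSelfAdjoint S)
    (hS0 : S ≠ 0) :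
    ∃ Q ∈ Algebra.adjoin ℂ {S}, IsStarProjection Q ∧ Q ≠ 0 ∧ S ∣ Q ∧ ∃ t : ℂ, S * Q = t • Q := by
  have hsym := (LinearMap.isSymmetric_iff_isSelfAdjoint S).2 hS
  have hn : Module.finrank ℂ E = Module.finrank ℂ E := rfl
  set b := hsym.eigenvectorBasis hn
  set μ := hsym.eigenvalues hn
  have hb : ∀ i, S (b i) = (μ i : ℂ) • b i := hsym.apply_eigenvectorBasis hn
  have hv : ∀ i, Module.End.HasEigenvector S (μ i : ℂ) (b i) :=
    hsym.hasEigenvector_eigenvectorBasis hn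
  obtain ⟨i₀, hi₀⟩ : ∃ i, μ i ≠ 0 := by
    by_contra! h
    exact hS0 (b.toBasis.ext fun i => by simp [hb, h i])
  set t := μ i₀
  -- `0` is a node so that `X ∣ r`, which puts the range of the projection inside that of `S`
  set s : Finset ℝ := insert 0 (Finset.univ.image μ)
  set r : ℝ[X] := Lagrange.basis s id t
  have hr : ∀ x ∈ s, r.eval x = if x = t then 1 else 0 := fun x hx => by
    split_ifs with h
    · exact h ▸ Lagrange.eval_basis_self (Set.injOn_id _) (Finset.mem_insert_of_mem
        (Finset.mem_image_of_mem μ (Finset.mem_univ i₀)))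
    · simpa using Lagrange.eval_basis_of_ne (v := id) (Ne.symm h) hx
  set q : ℂ[X] := r.map (algebraMap ℝ ℂ)
  have hq : ∀ i, aeval S q (b i) = (if μ i = t then 1 else 0 : ℂ) • b i := fun i => by
    rw [Module.End.aeval_apply_of_hasEigenvector (hv i),
      eval_map_algebraMap, ← Complex.coe_algebraMap, aeval_algebraMap_apply_eq_algebraMap_eval,
      hr _ (Finset.mem_insert_of_mem (Finset.mem_image_of_mem μ (Finset.mem_univ i)))]
    split_ifs <;> simp
  refine ⟨aeval S q, aeval_mem_adjoin_singleton _ _, ⟨?_, ?_⟩, ?_, ?_, t, ?_⟩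
  · exact b.toBasis.ext fun i => by
      simp only [OrthonormalBasis.coe_toBasis, Module.End.mul_apply, hq]
      split_ifs <;> simp [*]
  · exact hS.aeval_of_forall_coeff fun n => by
      simp [q, coeff_map, IsSelfAdjoint, Complex.conj_ofReal]
  · intro h
    have h₀ := hq i₀
    rw [if_pos rfl, one_smul, h, LinearMap.zero_apply] at h₀
    exact b.toBasis.ne_zero i₀ (by simpa using h₀.symm)
  · obtain ⟨q', hq'⟩ : X ∣ q := X_dvd_iff.2 <| by
      rw [coeff_map, coeff_zero_eq_eval_zero, hr 0 (Finset.mem_insert_self _ _),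
        if_neg (Ne.symm hi₀), map_zero]
    exact ⟨aeval S q', by rw [hq', map_mul, aeval_X]⟩
  · exact b.toBasis.ext fun i => by
      simp only [OrthonormalBasis.coe_toBasis, Module.End.mul_apply, LinearMap.smul_apply, hq]
      split_ifs with h
      · rw [one_smul, hb, h]
      · simp

end Spectral

section OrthProjFamily

variable {E : Type*} [NormedAddCommGroup E] [InnerProductSpace ℂ E] [FiniteDimensional ℂ E]
  {A : StarSubalgebra ℂ (E →ₗ[ℂ] E)} {p : ℕ} {P : Fin p → (E →ₗ[ℂ] E)}

theorem IsOrthProjFamily.mul_self (hP : IsOrthProjFamily A P) (i : Fin p) : P i * P i = P i := by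
  simpa using hP.2.2.2 i i

theorem IsOrthProjFamily.snoc_update (hP : IsOrthProjFamily A P) {j : Fin p}
    {Q : E →ₗ[ℂ] E} (hQA : Q ∈ A) (hQ : IsStarProjection Q) (hQj : P j * Q = Q)
    (hQ0 : Q ≠ 0) (hQP : Q ≠ P j) :
    IsOrthProjFamily A (Fin.snoc (Function.update P j Q) (P j - Q) : Fin (p + 1) → _) := by
  obtain ⟨hmem, hne, hstar, horth⟩ := hP
  have hQj' : Q * P j = Q := by
    simpa [hQ.isSelfAdjoint.star_eq, hstar] using congrArg star hQj
  have hkQ : ∀ k, k ≠ j → P k * Q = 0 := fun k hk => by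
    rw [← hQj, ← mul_assoc, horth, if_neg hk, zero_mul]
  have hQk : ∀ k, k ≠ j → Q * P k = 0 := fun k hk => by
    rw [← hQj', mul_assoc, horth, if_neg (Ne.symm hk), mul_zero]
  have hjj : P j * P j = P j := by simpa using horth j j
  refine ⟨?_, ?_, ?_, ?_⟩
  · intro a
    induction a using Fin.lastCases with
    | last => simpa using sub_mem (hmem j) hQA
    | cast k => rcases eq_or_ne k j with rfl | hk <;> simp_all
  · intro a
    induction a using Fin.lastCases with
    | last => simpa [sub_eq_zero] using hQP.symm
    | cast k => rcases eq_or_ne k j with rfl | hk <;> simp_all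
  · intro a
    induction a using Fin.lastCases with
    | last => simp [hstar, hQ.isSelfAdjoint.star_eq]
    | cast k => rcases eq_or_ne k j with rfl | hk <;> simp_all [hQ.isSelfAdjoint.star_eq]
  · have hQQ : Q * Q = Q := hQ.isIdempotentElem.eq
    intro a b
    induction a using Fin.lastCases with
    | last =>
      induction b using Fin.lastCases with
      | last => simp [sub_mul, mul_sub, hjj, hQj, hQj', hQQ]
      | cast l =>
        rcases eq_or_ne l j with rfl | hl
        · simp [(Fin.castSucc_lt_last l).ne', sub_mul, hQj, hQQ]
        · simp [(Fin.castSucc_lt_last l).ne', sub_mul, Function.update_of_ne hl, horth, hl.symm,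
            hQk l hl]
    | cast k =>
      induction b using Fin.lastCases with
      | last =>
        rcases eq_or_ne k j with rfl | hk
        · simp [(Fin.castSucc_lt_last k).ne, mul_sub, hQj', hQQ]
        · simp [(Fin.castSucc_lt_last k).ne, mul_sub, horth, hk, hkQ k hk]
      | cast l =>
        simp only [Fin.snoc_castSucc, Fin.castSucc_inj, Function.update_apply]
        split_ifs <;> simp_all

theorem IsMaximalOrthProjFamily.eq_zero_or_eq_of_mul_eq (hP : IsMaximalOrthProjFamily A P)
    {j : Fin p} {Q : E →ₗ[ℂ] E} (hQA : Q ∈ A) (hQ : IsStarProjection Q) (hQj : P j * Q = Q) :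
    Q = 0 ∨ Q = P j := by
  obtain ⟨hfam, hmax⟩ := hP
  have ⟨_, hne, _, horth⟩ := hfam
  by_contra! ⟨hQ0, hQP⟩
  set P' : Fin (p + 1) → (E →ₗ[ℂ] E) := Fin.snoc (Function.update P j Q) (P j - Q)
  have hP'j : P' (Fin.castSucc j) = Q := by simp only [P', Fin.snoc_castSucc, Function.update_self]
  have hP'k : ∀ k, k ≠ j → P' (Fin.castSucc k) = P k := fun k hk => by
    simp only [P', Fin.snoc_castSucc, Function.update_of_ne hk]
  have hP'last : P' (Fin.last p) = P j - Q := by simp only [P', Fin.snoc_last]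
  refine hmax _ P' (hfam.snoc_update hQA hQ hQj hQ0 hQP)
    (SetLike.lt_iff_le_and_exists.2 ⟨?_, ?_⟩)
  · refine Algebra.adjoin_le (Set.range_subset_iff.2 fun k => ?_)
    rcases eq_or_ne k j with rfl | hk
    · have hsplit : P k = P' (Fin.castSucc k) + P' (Fin.last p) := by
        rw [hP'j, hP'last, add_sub_cancel]
      rw [hsplit]
      exact add_mem (Algebra.subset_adjoin ⟨_, rfl⟩) (Algebra.subset_adjoin ⟨_, rfl⟩)
    · exact hP'k k hk ▸ Algebra.subset_adjoin ⟨_, rfl⟩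
  · refine ⟨Q, hP'j ▸ Algebra.subset_adjoin ⟨_, rfl⟩, fun hQmem => ?_⟩
    rcases eq_zero_or_eq_of_mem_adjoin_range horth (hne j) hQ.isIdempotentElem hQj hQmem
      with h | h
    exacts [hQ0 h, hQP h]

theorem IsMaximalOrthProjFamily.eq_smul_of_isSelfAdjoint (hP : IsMaximalOrthProjFamily A P)
    {j : Fin p} {S : E →ₗ[ℂ] E} (hSA : S ∈ A) (hS : IsSelfAdjoint S) (hPS : P j * S = S) :
    ∃ c : ℂ, S = c • P j := by
  rcases eq_or_ne S 0 with rfl | hS0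
  · exact ⟨0, (zero_smul ℂ _).symm⟩
  obtain ⟨Q, hQS, hQ, hQ0, ⟨R, rfl⟩, t, hSQ⟩ := hS.exists_isStarProjection_dvd hS0
  have hQA : S * R ∈ A := Algebra.adjoin_le (Set.singleton_subset_iff.2 hSA) hQS
  rcases hP.eq_zero_or_eq_of_mul_eq hQA hQ (by rw [← mul_assoc, hPS]) with h | h
  · exact absurd h hQ0
  have ⟨_, _, hstar, _⟩ := hP.1
  have hSP : S * P j = S := by
    simpa [hS.star_eq, hstar j] using congrArg star hPS
  exact ⟨t, by rw [← hSP, ← h, hSQ]⟩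

theorem IsMaximalOrthProjFamily.exists_mul_mul_eq_smul (hP : IsMaximalOrthProjFamily A P)
    (j : Fin p) {N : E →ₗ[ℂ] E} (hN : N ∈ A) : ∃ c : ℂ, P j * N * P j = c • P j := by
  have ⟨hmem, _, hstar, _⟩ := hP.1
  have hjj := hP.1.mul_self j
  set T := P j * N * P j
  have hTA : T ∈ A := mul_mem (mul_mem (hmem j) hN) (hmem j)
  have hPT : P j * T = T := by simp only [T, ← mul_assoc, hjj]
  have hPT' : P j * star T = star T := by
    simp [T, mul_assoc, hstar j, ← mul_assoc (P j) (P j), hjj]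
  obtain ⟨a, ha⟩ := hP.eq_smul_of_isSelfAdjoint (j := j)
    (by rw [realPart_apply_coe]; exact A.smul_mem (add_mem hTA (star_mem hTA)) _)
    (ℜ T).2 (by rw [realPart_apply_coe, mul_smul_comm, mul_add, hPT, hPT'])
  obtain ⟨b, hb⟩ := hP.eq_smul_of_isSelfAdjoint (j := j)
    (by rw [imaginaryPart_apply_coe]
        exact A.smul_mem (A.smul_mem (sub_mem hTA (star_mem hTA)) _) _)
    (ℑ T).2 (by rw [imaginaryPart_apply_coe, mul_smul_comm, mul_smul_comm, mul_sub, hPT, hPT'])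
  exact ⟨a + Complex.I * b, by rw [← realPart_add_I_smul_imaginaryPart T, ha, hb, smul_smul,
    ← add_smul]⟩

end OrthProjFamily

theorem offdiagonal_corner_one_dimensional_general
    {E : Type*} [NormedAddCommGroup E] [InnerProductSpace ℂ E] [FiniteDimensional ℂ E]
    (A : StarSubalgebra ℂ (E →ₗ[ℂ] E)) {p : ℕ} (P : Fin p → (E →ₗ[ℂ] E))
    (hP : IsMaximalOrthProjFamily A P)
    (i j : Fin p) (M : E →ₗ[ℂ] E)
    (hM : ∃ N ∈ A, M = P i * N * P j) (hM0 : M ≠ 0) :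
    ∀ N ∈ A, ∃ mu : ℂ, P i * N * P j = mu • M := by
  obtain ⟨N₀, hN₀, rfl⟩ := hM
  set M := P i * N₀ * P j
  intro N hN
  have ⟨hmem, _, hstarP, _⟩ := hP.1
  have hii := hP.1.mul_self i
  have hjj := hP.1.mul_self j
  have hstar : star M = P j * star N₀ * P i := by simp [M, mul_assoc, hstarP]
  obtain ⟨lam, hlam⟩ := hP.exists_mul_mul_eq_smul i
    (mul_mem (mul_mem hN₀ (hmem j)) (star_mem hN₀))
  obtain ⟨mu, hmu⟩ := hP.exists_mul_mul_eq_smul j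
    (mul_mem (mul_mem (star_mem hN₀) (hmem i)) hN)
  have hMM : M * star M = lam • P i := by
    rw [← hlam, hstar]; simp only [M, mul_assoc, ← mul_assoc (P j) (P j), hjj]
  have hMN : star M * (P i * N * P j) = mu • P j := by
    rw [← hmu, hstar]; simp only [mul_assoc, ← mul_assoc (P i) (P i), hii]
  have hlam0 : lam ≠ 0 := by
    rintro rfl
    exact hM0 (LinearMap.eq_zero_of_mul_star_self_eq_zero (by rw [hMM, zero_smul]))
  have hscaled : lam • (P i * N * P j) = mu • M :=
    calc lam • (P i * N * P j) = M * star M * (P i * N * P j) := by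
          rw [hMM, smul_mul_assoc, ← mul_assoc, ← mul_assoc, hii]
      _ = M * (mu • P j) := by rw [mul_assoc, hMN]
      _ = mu • M := by rw [mul_smul_comm, mul_assoc, hjj]
  exact ⟨mu / lam, by rw [div_eq_inv_mul, ← smul_smul, ← hscaled, smul_smul,
    inv_mul_cancel₀ hlam0, one_smul]⟩

theorem offdiagonal_corner_one_dimensional
    {E : Type*} [NormedAddCommGroup E] [InnerProductSpace ℂ E] [FiniteDimensional ℂ E]
    (A : StarSubalgebra ℂ (E →ₗ[ℂ] E)) {p : ℕ} (P : Fin p → (E →ₗ[ℂ] E))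
    (hP : IsMaximalOrthProjFamily A P)
    (i j : Fin p) (hij : i ≠ j) (M : E →ₗ[ℂ] E) (hMA : M ∈ A)
    (hM : ∃ N ∈ A, M = P i * N * P j) (hM0 : M ≠ 0) :
    ∀ N ∈ A, ∃ mu : ℂ, P i * N * P j = mu • M :=
  offdiagonal_corner_one_dimensional_general A P hP i j M hM hM0
end
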